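/- For any matrix Φ ∈ ℝ^{m×n}, the maximum abstract simplicial complex associated with Φ equals {S ⊆ U_n : ‖z_S‖₁ < 1/2 for every z ∈ Ext(null(Φ) ∩ B₁ⁿ)}, where Ext denotes the set of extreme points. -/

import Mathlib

/-- The ℓ₁ norm of a vector in ℝⁿ. -/
noncomputable def l1 {n : ℕ} (x : Fin n → ℝ) : ℝ := ∑ i, |x i|

/-- The ℓ₁ norm of the restriction of a vector to an index set `S`. -/
noncomputable def l1S {n : ℕ} (S : Finset (Fin n)) (x : Fin n → ℝ) : ℝ := ∑ i ∈ S, |x i|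

/-- The maximum abstract simplicial complex associated with `Φ`:
all index sets `S` with `‖η_S‖₁ < ‖η_{Sᶜ}‖₁` for every nonzero `η ∈ null(Φ)`. -/
def Tmax {m n : ℕ} (Φ : Matrix (Fin m) (Fin n) ℝ) : Set (Finset (Fin n)) :=
  {S | ∀ η : Fin n → ℝ, Φ.mulVec η = 0 → η ≠ 0 → l1S S η < l1S Sᶜ η}

/-! The function `z ↦ ‖z_S‖₁` is convex and continuous, so its maximum over the compact convex set
`null(Φ) ∩ B₁ⁿ` is attained at an extreme point. Hence the bound `‖z_S‖₁ < 1/2` at the extreme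
points holds on the whole set, in particular at `η / ‖η‖₁` for nonzero `η ∈ null(Φ)`, and
`‖η_S‖₁ < ‖η‖₁ / 2` is `‖η_S‖₁ < ‖η_{Sᶜ}‖₁`. Conversely a nonzero extreme point `z` has
`‖z‖₁ ≤ 1`, so `‖z_S‖₁ < ‖z_{Sᶜ}‖₁` forces `‖z_S‖₁ < 1/2`. -/

section MaxAtExtremePoint

theorem ConvexOn.isExtreme_setOf_isMaxOn {𝕜 E β : Type*} [Semiring 𝕜] [PartialOrder 𝕜]
    [AddCommMonoid E] [SMul 𝕜 E] [AddCommMonoid β] [LinearOrder β] [IsOrderedCancelAddMonoid β]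
    [Module 𝕜 β] [PosSMulStrictMono 𝕜 β] {s K : Set E} {f : E → β}
    (hf : ConvexOn 𝕜 s f) (hKs : K ⊆ s) :
    IsExtreme 𝕜 K {x ∈ K | IsMaxOn f K x} := by
  refine ⟨fun x hx => hx.1, fun x₁ hx₁ x₂ hx₂ x hx hseg => ⟨hx₁, fun y hy => ?_⟩⟩
  exact (hx.2 hy).trans (hf.le_left_of_right_le (hKs hx₁) (hKs hx₂) hseg (hx.2 hx₂))

theorem IsCompact.exists_mem_extremePoints_isMaxOn {E : Type*} [AddCommGroup E] [Module ℝ E]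
    [TopologicalSpace E] [T2Space E] [IsTopologicalAddGroup E] [ContinuousSMul ℝ E]
    [LocallyConvexSpace ℝ E] {s K : Set E} {f : E → ℝ} (hK : IsCompact K) (hne : K.Nonempty)
    (hf : ConvexOn ℝ s f) (hKs : K ⊆ s) (hcont : ContinuousOn f K) :
    ∃ x ∈ K.extremePoints ℝ, IsMaxOn f K x := by
  obtain ⟨x₀, hx₀, hmax⟩ := hK.exists_isMaxOn hne hcont
  have hargmax : {x ∈ K | IsMaxOn f K x} = K ∩ f ⁻¹' Set.Ici (f x₀) := by
    ext x
    exact ⟨fun hx => ⟨hx.1, hx.2 hx₀⟩, fun hx => ⟨hx.1, fun y hy => show f y ≤ f x from (hmax hy).trans hx.2⟩⟩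
  have hcompact : IsCompact {x ∈ K | IsMaxOn f K x} := by
    rw [hargmax]
    exact hK.of_isClosed_subset (hcont.preimage_isClosed_of_isClosed hK.isClosed isClosed_Ici)
      Set.inter_subset_left
  obtain ⟨x, hx⟩ := hcompact.extremePoints_nonempty ⟨x₀, hx₀, hmax⟩
  exact ⟨x, (hf.isExtreme_setOf_isMaxOn hKs).extremePoints_subset_extremePoints hx, hx.1.2⟩

end MaxAtExtremePoint

section L1

variable {n : ℕ}

theorem l1S_add_l1S_compl (S : Finset (Fin n)) (x : Fin n → ℝ) :
    l1S S x + l1S Sᶜ x = l1 x :=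
  Finset.sum_add_sum_compl S _

theorem l1S_add_le (S : Finset (Fin n)) (x y : Fin n → ℝ) :
    l1S S (x + y) ≤ l1S S x + l1S S y := by
  rw [l1S, l1S, l1S, ← Finset.sum_add_distrib]
  exact Finset.sum_le_sum fun i _ => abs_add_le (x i) (y i)

theorem l1S_smul (S : Finset (Fin n)) (c : ℝ) (x : Fin n → ℝ) :
    l1S S (c • x) = |c| * l1S S x := by
  simp only [l1S, Pi.smul_apply, smul_eq_mul, abs_mul, Finset.mul_sum]

theorem l1_smul (c : ℝ) (x : Fin n → ℝ) : l1 (c • x) = |c| * l1 x :=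
  l1S_smul Finset.univ c x

theorem convexOn_l1S (S : Finset (Fin n)) : ConvexOn ℝ Set.univ (l1S S) :=
  (Seminorm.of (𝕜 := ℝ) (l1S S) (l1S_add_le S) (l1S_smul S)).convexOn

theorem continuous_l1S (S : Finset (Fin n)) : Continuous (l1S S) :=
  continuous_finsetSum _ fun i _ => (continuous_apply i).abs

theorem abs_le_l1 (x : Fin n → ℝ) (i : Fin n) : |x i| ≤ l1 x :=
  Finset.single_le_sum (f := fun j => |x j|) (fun _ _ => abs_nonneg _) (Finset.mem_univ i)

theorem l1_pos {x : Fin n → ℝ} (hx : x ≠ 0) : 0 < l1 x := by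
  obtain ⟨i, hi⟩ := Function.ne_iff.1 hx
  exact (abs_pos.2 hi).trans_le (abs_le_l1 x i)

theorem l1_inv_smul_self {x : Fin n → ℝ} (hx : x ≠ 0) : l1 ((l1 x)⁻¹ • x) = 1 := by
  rw [l1_smul, abs_of_pos (inv_pos.2 (l1_pos hx)), inv_mul_cancel₀ (l1_pos hx).ne']

theorem isCompact_l1_le_one : IsCompact {x : Fin n → ℝ | l1 x ≤ 1} := by
  refine Metric.isCompact_of_isClosed_isBounded
    (isClosed_le (continuous_l1S Finset.univ) continuous_const) ?_
  refine (Metric.isBounded_iff_subset_closedBall 0).2 ⟨1, fun x hx => ?_⟩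
  rw [mem_closedBall_zero_iff, pi_norm_le_iff_of_nonneg zero_le_one]
  exact fun i => (abs_le_l1 x i).trans hx

end L1

theorem isClosed_setOf_mulVec_eq_zero {m n : ℕ} (Φ : Matrix (Fin m) (Fin n) ℝ) :
    IsClosed {η : Fin n → ℝ | Φ.mulVec η = 0} :=
  isClosed_eq (continuous_const.matrix_mulVec continuous_id) continuous_const

/-- For any `Φ ∈ ℝ^{m×n}`, the maximum abstract simplicial complex associated with `Φ`
equals the collection of index sets `S` with `‖z_S‖₁ < 1/2` for every extreme point `z`
of `null(Φ) ∩ B₁ⁿ`. -/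
theorem stmt4 {m n : ℕ} (Φ : Matrix (Fin m) (Fin n) ℝ) :
    Tmax Φ = {S : Finset (Fin n) |
      ∀ z ∈ Set.extremePoints ℝ ({η : Fin n → ℝ | Φ.mulVec η = 0} ∩ {x | l1 x ≤ 1}),
        l1S S z < 1 / 2} := by
  set K : Set (Fin n → ℝ) := {η : Fin n → ℝ | Φ.mulVec η = 0} ∩ {x | l1 x ≤ 1}
  ext S
  constructor
  · rintro hS z ⟨⟨hz_null, hz_ball⟩, -⟩
    rcases eq_or_ne z 0 with rfl | hz0
    · simp [l1S]
    · linarith [hS z hz_null hz0, l1S_add_l1S_compl S z, hz_ball.out]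
  · intro hS η hη_null hη0
    have hK : IsCompact K := isCompact_l1_le_one.inter_left (isClosed_setOf_mulVec_eq_zero Φ)
    obtain ⟨x, hx_ext, hx_max⟩ := hK.exists_mem_extremePoints_isMaxOn ⟨0, by simp [K, l1]⟩
      (convexOn_l1S S) (Set.subset_univ K) (continuous_l1S S).continuousOn
    have hη_K : (l1 η)⁻¹ • η ∈ K :=
      ⟨by simp [Matrix.mulVec_smul, hη_null], (l1_inv_smul_self hη0).le⟩
    have hη_pos := l1_pos hη0
    have hη_S : (l1 η)⁻¹ * l1S S η < 1 / 2 := by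
      rw [← abs_of_pos (inv_pos.2 hη_pos), ← l1S_smul]
      exact (hx_max hη_K).trans_lt (hS x hx_ext)
    rw [inv_mul_lt_iff₀ hη_pos] at hη_S
    linarith [l1S_add_l1S_compl S η]
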